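/- Let K⁰ → K¹ → K² → ⋯ be a direct system in Ch(A, E) with each transition map an admissible monomorphism, where (X, Y) is an admissible balanced pair in a complete and cocomplete abelian category A and E the induced exact structure. If each Kⁿ lies in (E-dwX̃)⊥ (equivalently, every chain map from a complex of objects of X to Kⁿ is null homotopic), then the colimit K = colim Kⁿ is right X-acyclic. -/

import Mathlib

open CategoryTheory Category Limits ZeroObject

universe v u

namespace Paper

variable {A : Type u} [Category.{v} A] [Abelian A]

/-- Chain complexes over `A` indexed by `ℤ` (homological convention). -/
abbrev Cx (A : Type u) [Category.{v} A] [Abelian A] := ChainComplex A ℤ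

/-- A chain map is null homotopic if it is homotopic to the zero map. -/
def NullHomotopic {X Y : Cx A} (f : X ⟶ Y) : Prop := Nonempty (Homotopy f 0)

/-- A complex is contractible if its identity is null homotopic. -/
def Contractible (X : Cx A) : Prop := Nonempty (Homotopy (𝟙 X) (0 : X ⟶ X))

/-- `Hom_A(X, E)` is exact at degree `n` for every `X ∈ 𝒳`. -/
def RightAcyclicAt (𝒳 : Set A) (E : Cx A) (n : ℤ) : Prop :=
  ∀ ⦃X : A⦄, X ∈ 𝒳 → ∀ g : X ⟶ E.X n, g ≫ E.d n (n - 1) = 0 →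
    ∃ h : X ⟶ E.X (n + 1), h ≫ E.d (n + 1) n = g

/-- The complex `E` is right `𝒳`-acyclic. -/
def RightAcyclic (𝒳 : Set A) (E : Cx A) : Prop := ∀ n : ℤ, RightAcyclicAt 𝒳 E n

/-- `Hom_A(E, Y)` is exact at (cohomological) degree `n` for every `Y ∈ 𝒴`. -/
def LeftAcyclicAt (𝒴 : Set A) (E : Cx A) (n : ℤ) : Prop :=
  ∀ ⦃Y : A⦄, Y ∈ 𝒴 → ∀ g : E.X n ⟶ Y, E.d (n + 1) n ≫ g = 0 →
    ∃ h : E.X (n - 1) ⟶ Y, E.d n (n - 1) ≫ h = g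

/-- The complex `E` is left `𝒴`-acyclic. -/
def LeftAcyclic (𝒴 : Set A) (E : Cx A) : Prop := ∀ n : ℤ, LeftAcyclicAt 𝒴 E n

/-- `f : X ⟶ M` is a right `𝒳`-approximation of `M`. -/
def IsRightApprox (𝒳 : Set A) {X M : A} (f : X ⟶ M) : Prop :=
  ∀ ⦃X' : A⦄, X' ∈ 𝒳 → ∀ g : X' ⟶ M, ∃ h : X' ⟶ X, h ≫ f = g

/-- `f : M ⟶ Y` is a left `𝒴`-approximation of `M`. -/
def IsLeftApprox (𝒴 : Set A) {M Y : A} (f : M ⟶ Y) : Prop :=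
  ∀ ⦃Y' : A⦄, Y' ∈ 𝒴 → ∀ g : M ⟶ Y', ∃ h : Y ⟶ Y', f ≫ h = g

/-- `R` is an augmented `𝒳`-resolution of `M`:  `⋯ → X₁ → X₀ → M → 0`, with the
`𝒳`-objects placed in degrees `≥ 0` and `M` in degree `-1`. -/
def IsAugXRes (𝒳 : Set A) (M : A) (R : Cx A) : Prop :=
  (∀ n : ℤ, 0 ≤ n → R.X n ∈ 𝒳) ∧ (∀ n : ℤ, n < -1 → IsZero (R.X n)) ∧
    Nonempty (R.X (-1) ≅ M)

/-- `R` is an augmented `𝒴`-coresolution of `M`: `0 → M → Y⁰ → Y¹ → ⋯`, with `M` in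
degree `0` and the `𝒴`-objects in degrees `≤ -1`. -/
def IsAugYCores (𝒴 : Set A) (M : A) (R : Cx A) : Prop :=
  (∀ n : ℤ, n ≤ -1 → R.X n ∈ 𝒴) ∧ (∀ n : ℤ, 0 < n → IsZero (R.X n)) ∧
    Nonempty (R.X 0 ≅ M)

/-- A balanced pair `(𝒳, 𝒴)` of (full additive, isomorphism- and summand-closed)
subcategories of `A`. -/
structure BalancedPair (𝒳 𝒴 : Set A) : Prop where
  isoClosedX : ∀ ⦃X X' : A⦄, X ∈ 𝒳 → (X ≅ X') → X' ∈ 𝒳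
  isoClosedY : ∀ ⦃Y Y' : A⦄, Y ∈ 𝒴 → (Y ≅ Y') → Y' ∈ 𝒴
  summandClosedX : ∀ ⦃X S : A⦄, X ∈ 𝒳 → ∀ (s : S ⟶ X) (r : X ⟶ S), s ≫ r = 𝟙 S → S ∈ 𝒳
  summandClosedY : ∀ ⦃Y S : A⦄, Y ∈ 𝒴 → ∀ (s : S ⟶ Y) (r : Y ⟶ S), s ≫ r = 𝟙 S → S ∈ 𝒴
  contravariantlyFinite : ∀ M : A, ∃ X ∈ 𝒳, ∃ f : X ⟶ M, IsRightApprox 𝒳 f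
  covariantlyFinite : ∀ M : A, ∃ Y ∈ 𝒴, ∃ f : M ⟶ Y, IsLeftApprox 𝒴 f
  resolution : ∀ M : A, ∃ R : Cx A, IsAugXRes 𝒳 M R ∧ RightAcyclic 𝒳 R ∧ LeftAcyclic 𝒴 R
  coresolution : ∀ M : A, ∃ R : Cx A, IsAugYCores 𝒴 M R ∧ RightAcyclic 𝒳 R ∧ LeftAcyclic 𝒴 R

/-- The balanced pair `(𝒳, 𝒴)` is admissible: every right `𝒳`-approximation is epic and
every left `𝒴`-approximation is monic. -/
def Admissible (𝒳 𝒴 : Set A) : Prop :=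
  (∀ ⦃X M : A⦄, X ∈ 𝒳 → ∀ f : X ⟶ M, IsRightApprox 𝒳 f → Epi f) ∧
  (∀ ⦃M Y : A⦄, Y ∈ 𝒴 → ∀ f : M ⟶ Y, IsLeftApprox 𝒴 f → Mono f)

/-- A short exact sequence of `A` belonging to the exact structure `E` induced by `𝒳`:
it is exact and remains exact after applying `Hom_A(X, -)` for every `X ∈ 𝒳`. -/
def EExact (𝒳 : Set A) {D W C : A} (i : D ⟶ W) (p : W ⟶ C) : Prop :=
  ∃ w : i ≫ p = 0, (ShortComplex.mk i p w).ShortExact ∧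
    ∀ ⦃X : A⦄, X ∈ 𝒳 → ∀ g : X ⟶ C, ∃ h : X ⟶ W, h ≫ p = g

/-- A short exact sequence of complexes which is degreewise in `E`. -/
def ChEExact (𝒳 : Set A) {D W C : Cx A} (i : D ⟶ W) (p : W ⟶ C) : Prop :=
  ∀ n : ℤ, EExact 𝒳 (i.f n) (p.f n)

/-- Vanishing of `Ext¹` in the exact category `Ch(A, E)`: every admissible short exact
sequence `0 → D → W → C → 0` in `Ch(A, E)` splits. -/
def Ext1ChVanish (𝒳 : Set A) (C D : Cx A) : Prop :=
  ∀ ⦃W : Cx A⦄ (i : D ⟶ W) (p : W ⟶ C), ChEExact 𝒳 i p → ∃ r : W ⟶ D, i ≫ r = 𝟙 D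

/-- The class `Ẽ` of right `𝒳`-acyclic complexes. -/
def Etilde (𝒳 : Set A) : Set (Cx A) := {E | RightAcyclic 𝒳 E}

/-- The class `E-dw X̃` of complexes with all terms in `𝒳`. -/
def dwX (𝒳 : Set A) : Set (Cx A) := {G | ∀ n : ℤ, G.X n ∈ 𝒳}

/-- The class `E-dg X̃`: complexes with terms in `𝒳` such that every chain map to a right
`𝒳`-acyclic complex is null homotopic. -/
def EdgX (𝒳 : Set A) : Set (Cx A) :=
  {G | (∀ n : ℤ, G.X n ∈ 𝒳) ∧ ∀ E ∈ Etilde 𝒳, ∀ f : G ⟶ E, NullHomotopic f}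

/-- The right `Ext¹`-orthogonal class of `E-dw X̃` in `Ch(A, E)`. -/
def dwPerp (𝒳 : Set A) : Set (Cx A) := {C | ∀ G ∈ dwX 𝒳, Ext1ChVanish 𝒳 G C}

/-- The class `X̃_E` of right `𝒳`-acyclic complexes all of whose cycles lie in `𝒳`. -/
def XtildeE (𝒳 : Set A) : Set (Cx A) :=
  {G | RightAcyclic 𝒳 G ∧ ∀ n : ℤ, kernel (G.d n (n - 1)) ∈ 𝒳}

/-- The disk complex `Dⁿ(M)`: `M` in degrees `n` and `n - 1`, identity differential. -/
noncomputable def disk (M : A) (n : ℤ) : Cx A where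
  X k := if k = n ∨ k = n - 1 then M else 0
  d i j :=
    if h : i = n ∧ j = n - 1 then
      eqToHom (by simp [h.1, h.2])
    else 0
  shape i j hij := by
    try dsimp only
    rw [dif_neg]
    rintro ⟨rfl, rfl⟩
    exact hij (by rw [ComplexShape.down_Rel]; omega)
  d_comp_d' i j k _ _ := by
    try dsimp only
    by_cases h : j = n ∧ k = n - 1
    · rw [dif_neg (by rintro ⟨-, rfl⟩; omega : ¬(i = n ∧ j = n - 1)), zero_comp]
    · rw [dif_neg h, comp_zero]

/-- The shift `Σᵏ C`, with `(Σᵏ C)ₙ = C_{n-k}` and differential `(-1)ᵏ d`. -/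
@[simps] def shiftC (C : Cx A) (k : ℤ) : Cx A where
  X n := C.X (n - k)
  d i j := (k.negOnePow : ℤ) • C.d (i - k) (j - k)
  shape i j hij := by
    try dsimp only
    rw [C.shape, smul_zero]
    simp only [ComplexShape.down_Rel] at *
    omega
  d_comp_d' i j k _ _ := by
    try dsimp only
    rw [Preadditive.zsmul_comp, Preadditive.comp_zsmul, C.d_comp_d, smul_zero, smul_zero]

/-- Acyclicity of a complex. -/
def AcyclicCx (C : Cx A) : Prop := ∀ n : ℤ, C.ExactAt n

/-- Vanishing of the ordinary `Ext¹` in the abelian category `A`. -/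
def Ext1Vanish (X Z : A) : Prop :=
  ∀ ⦃W : A⦄ (i : Z ⟶ W) (p : W ⟶ X) (w : i ≫ p = 0),
    (ShortComplex.mk i p w).ShortExact → ∃ r : W ⟶ Z, i ≫ r = 𝟙 Z

/-- `(𝒻, 𝒞)` is a cotorsion pair in the abelian category `A`. -/
def CotorsionPair (𝒻 𝒞 : Set A) : Prop :=
  (∀ X : A, X ∈ 𝒻 ↔ ∀ Z ∈ 𝒞, Ext1Vanish X Z) ∧
  (∀ Z : A, Z ∈ 𝒞 ↔ ∀ X ∈ 𝒻, Ext1Vanish X Z)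

/-- Completeness of a cotorsion pair. -/
def CompletePair (𝒻 𝒞 : Set A) : Prop :=
  (∀ M : A, ∃ (Z F : A) (i : Z ⟶ F) (p : F ⟶ M) (w : i ≫ p = 0),
      (ShortComplex.mk i p w).ShortExact ∧ F ∈ 𝒻 ∧ Z ∈ 𝒞) ∧
  (∀ M : A, ∃ (Z F : A) (i : M ⟶ Z) (p : Z ⟶ F) (w : i ≫ p = 0),
      (ShortComplex.mk i p w).ShortExact ∧ Z ∈ 𝒞 ∧ F ∈ 𝒻)

/-- Heredity of a cotorsion pair. -/
def HereditaryPair (𝒻 𝒞 : Set A) : Prop :=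
  (∀ ⦃X Y Z : A⦄ (i : X ⟶ Y) (p : Y ⟶ Z) (w : i ≫ p = 0),
      (ShortComplex.mk i p w).ShortExact → Y ∈ 𝒻 → Z ∈ 𝒻 → X ∈ 𝒻) ∧
  (∀ ⦃X Y Z : A⦄ (i : X ⟶ Y) (p : Y ⟶ Z) (w : i ≫ p = 0),
      (ShortComplex.mk i p w).ShortExact → X ∈ 𝒞 → Y ∈ 𝒞 → Z ∈ 𝒞)

/-- A complete hereditary cotorsion triple `(𝒳, 𝒵, 𝒴)`. -/
def CotorsionTriple (𝒳 𝒵 𝒴 : Set A) : Prop :=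
  CotorsionPair 𝒳 𝒵 ∧ CotorsionPair 𝒵 𝒴 ∧
  CompletePair 𝒳 𝒵 ∧ CompletePair 𝒵 𝒴 ∧
  HereditaryPair 𝒳 𝒵 ∧ HereditaryPair 𝒵 𝒴

/-!
Each `Kⁱ` is right `𝒳`-acyclic: a cycle `g : X ⟶ Kⁱₙ` with `X ∈ 𝒳` is the attaching map of an
`E`-admissible extension `0 → Kⁱ → Kⁱ ∪_g Sⁿ⁺¹(X) → Sⁿ⁺¹(X) → 0`, and a splitting of it
provides a primitive of `g`.

For a balanced pair, short exact sequences that stay exact under `Hom(𝒳, -)` are exactly those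
that stay exact under `Hom(-, 𝒴)`: push out or pull back along the given map and split the
result using an `𝒳`-resolution or a `𝒴`-coresolution. Hence right `𝒳`-acyclic and left
`𝒴`-acyclic complexes coincide, and it suffices that `Hom(K, Y)` is exact for `Y ∈ 𝒴`. The
transition maps are degreewise `E`-admissible monos, so the restriction maps of the inverse
system `Hom(Kⁱ, Y)` are surjective; primitives can then be corrected step by step
(Mittag-Leffler) into a compatible family, which descends to the colimit.
-/

variable {𝒳 𝒴 : Set A}

lemma BalancedPair.exists_epi (hbp : BalancedPair 𝒳 𝒴) (hadm : Admissible 𝒳 𝒴) (M : A) :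
    ∃ X ∈ 𝒳, ∃ π : X ⟶ M, Epi π := by
  obtain ⟨X, hX, π, hπ⟩ := hbp.contravariantlyFinite M
  exact ⟨X, hX, π, hadm.1 hX π hπ⟩

lemma BalancedPair.exists_mono (hbp : BalancedPair 𝒳 𝒴) (hadm : Admissible 𝒳 𝒴) (M : A) :
    ∃ Y ∈ 𝒴, ∃ ι : M ⟶ Y, Mono ι := by
  obtain ⟨Y, hY, ι, hι⟩ := hbp.covariantlyFinite M
  exact ⟨Y, hY, ι, hadm.2 hY ι hι⟩

lemma BalancedPair.zero_mem_left (hbp : BalancedPair 𝒳 𝒴) : (0 : A) ∈ 𝒳 := by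
  obtain ⟨X, hX, -⟩ := hbp.contravariantlyFinite 0
  exact hbp.summandClosedX hX 0 0 ((isZero_zero A).eq_of_src _ _)

lemma RightAcyclic.exists_lift {K : Cx A} (hK : RightAcyclic 𝒳 K) {i j k : ℤ}
    (hij : i = j + 1) (hjk : k = j - 1) {X : A} (hX : X ∈ 𝒳) (g : X ⟶ K.X j)
    (hg : g ≫ K.d j k = 0) : ∃ h : X ⟶ K.X i, h ≫ K.d i j = g := by
  subst hij hjk
  exact hK j hX g hg

lemma LeftAcyclic.exists_desc {K : Cx A} (hK : LeftAcyclic 𝒴 K) {i j k : ℤ}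
    (hij : i = j + 1) (hjk : k = j - 1) {Y : A} (hY : Y ∈ 𝒴) (g : K.X j ⟶ Y)
    (hg : K.d i j ≫ g = 0) : ∃ h : K.X k ⟶ Y, K.d j k ≫ h = g := by
  subst hij hjk
  exact hK j hY g hg

section Exactness

variable {K : Cx A} {i j k : ℤ}

lemma RightAcyclic.epi_kernel_lift (hgen : ∀ M : A, ∃ X ∈ 𝒳, ∃ π : X ⟶ M, Epi π)
    (hK : RightAcyclic 𝒳 K) (hij : i = j + 1) (hjk : k = j - 1) :
    Epi (kernel.lift (K.d j k) (K.d i j) (K.d_comp_d i j k)) := by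
  obtain ⟨X, hX, π, hπ⟩ := hgen (kernel (K.d j k))
  obtain ⟨h, hh⟩ := hK.exists_lift hij hjk hX (π ≫ kernel.ι _) (by simp)
  have hfac : h ≫ kernel.lift (K.d j k) (K.d i j) (K.d_comp_d i j k) = π := by ext; simp [hh]
  exact epi_of_epi_fac hfac

lemma LeftAcyclic.mono_cokernel_desc (hcogen : ∀ M : A, ∃ Y ∈ 𝒴, ∃ ι : M ⟶ Y, Mono ι)
    (hK : LeftAcyclic 𝒴 K) (hij : i = j + 1) (hjk : k = j - 1) :
    Mono (cokernel.desc (K.d i j) (K.d j k) (K.d_comp_d i j k)) := by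
  obtain ⟨Y, hY, ι, hι⟩ := hcogen (cokernel (K.d i j))
  obtain ⟨h, hh⟩ := hK.exists_desc hij hjk hY (cokernel.π _ ≫ ι) (by simp)
  have hfac : cokernel.desc (K.d i j) (K.d j k) (K.d_comp_d i j k) ≫ h = ι := by ext; simp [hh]
  exact mono_of_mono_fac hfac

lemma RightAcyclic.exact (hgen : ∀ M : A, ∃ X ∈ 𝒳, ∃ π : X ⟶ M, Epi π)
    (hK : RightAcyclic 𝒳 K) (hij : i = j + 1) (hjk : k = j - 1) :
    (ShortComplex.mk (K.d i j) (K.d j k) (K.d_comp_d i j k)).Exact :=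
  (ShortComplex.exact_iff_epi_kernel_lift _).2 (hK.epi_kernel_lift hgen hij hjk)

lemma LeftAcyclic.exact (hcogen : ∀ M : A, ∃ Y ∈ 𝒴, ∃ ι : M ⟶ Y, Mono ι)
    (hK : LeftAcyclic 𝒴 K) (hij : i = j + 1) (hjk : k = j - 1) :
    (ShortComplex.mk (K.d i j) (K.d j k) (K.d_comp_d i j k)).Exact :=
  (ShortComplex.exact_iff_mono_cokernel_desc _).2 (hK.mono_cokernel_desc hcogen hij hjk)

end Exactness

section ShortExact

variable {S : ShortComplex A}

lemma shortExact_pushout (hS : S.ShortExact) {Y : A} (g : S.X₁ ⟶ Y) :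
    (ShortComplex.mk (pushout.inr S.f g) (pushout.desc S.g 0 (by simp))
      (pushout.inr_desc _ _ _)).ShortExact := by
  have := hS.mono_f
  have := hS.epi_g
  have : Epi (pushout.desc S.g 0 (by simp) : pushout S.f g ⟶ S.X₃) :=
    epi_of_epi_fac (pushout.inl_desc _ _ _)
  refine ⟨ShortComplex.exact_of_g_is_cokernel _ ?_⟩
  refine CokernelCofork.IsColimit.ofπ' _ _ fun {T} t ht ↦ ?_
  refine ⟨hS.exact.desc (pushout.inl S.f g ≫ t) (by
    rw [pushout.condition_assoc, show pushout.inr S.f g ≫ t = 0 from ht, comp_zero]), ?_⟩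
  apply pushout.hom_ext
  · rw [pushout.inl_desc_assoc]
    exact hS.exact.g_desc _ _
  · rw [pushout.inr_desc_assoc, zero_comp]
    exact ht.symm

lemma shortExact_pullback (hS : S.ShortExact) {X : A} (g : X ⟶ S.X₃) :
    (ShortComplex.mk (pullback.lift S.f 0 (by simp)) (pullback.snd S.g g)
      (pullback.lift_snd _ _ _)).ShortExact := by
  have := hS.mono_f
  have := hS.epi_g
  have : Mono (pullback.lift S.f 0 (by simp) : S.X₁ ⟶ pullback S.g g) :=
    mono_of_mono_fac (pullback.lift_fst _ _ _)
  refine ⟨ShortComplex.exact_of_f_is_kernel _ ?_⟩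
  refine KernelFork.IsLimit.ofι' _ _ fun {T} t ht ↦ ?_
  refine ⟨hS.exact.lift (t ≫ pullback.fst S.g g) (by
    rw [assoc, pullback.condition, ← assoc, show t ≫ pullback.snd S.g g = 0 from ht,
      zero_comp]), ?_⟩
  apply pullback.hom_ext
  · rw [assoc, pullback.lift_fst]
    exact hS.exact.lift_f _ _
  · rw [assoc, pullback.lift_snd, comp_zero]
    exact ht.symm

end ShortExact

/-- The dual of `EExact`: short exact sequences on which `Hom_A(-, Y)` stays exact for `Y ∈ 𝒴`.
For a balanced pair the two notions agree. -/
def CoEExact (𝒴 : Set A) {D W C : A} (i : D ⟶ W) (p : W ⟶ C) : Prop :=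
  ∃ w : i ≫ p = 0, (ShortComplex.mk i p w).ShortExact ∧
    ∀ ⦃Y : A⦄, Y ∈ 𝒴 → ∀ g : D ⟶ Y, ∃ h : W ⟶ Y, i ≫ h = g

section Splitting

variable (hbp : BalancedPair 𝒳 𝒴) (hadm : Admissible 𝒳 𝒴)
include hbp hadm

lemma EExact.exists_retraction {Y W C : A} (hY : Y ∈ 𝒴) {j : Y ⟶ W} {q : W ⟶ C}
    (hE : EExact 𝒳 j q) : ∃ r : W ⟶ Y, j ≫ r = 𝟙 Y := by
  obtain ⟨w, hS, hlift⟩ := hE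
  have := hS.mono_f
  obtain ⟨R, ⟨hRX, hRzero, ⟨α⟩⟩, hRr, hRl⟩ := hbp.resolution C
  have hgen := hbp.exists_epi hadm
  have hR : (ShortComplex.mk (R.d 1 0) (R.d 0 (-1)) (R.d_comp_d _ _ _)).Exact :=
    hRr.exact hgen (by norm_num) (by norm_num)
  have : Epi (R.d 0 (-1)) := (hRr.exact hgen (k := -2) (by norm_num) (by norm_num)).epi_f
    ((hRzero (-2) (by norm_num)).eq_of_tgt _ _)
  obtain ⟨u, hu⟩ := hlift (hRX 0 le_rfl) (R.d 0 (-1) ≫ α.hom)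
  obtain ⟨v, hv⟩ : ∃ v : R.X 1 ⟶ Y, v ≫ j = R.d 1 0 ≫ u :=
    ⟨hS.exact.lift (R.d 1 0 ≫ u) (by rw [assoc, hu, R.d_comp_d_assoc, zero_comp]),
      hS.exact.lift_f _ _⟩
  obtain ⟨t, ht⟩ := hRl.exists_desc (i := 2) (k := 0) (by norm_num) (by norm_num) hY v
    (by rw [← cancel_mono j]; simp [hv])
  -- `u - t ≫ j` still lifts `R.d 0 (-1) ≫ α.hom` and kills boundaries, so it descends to `C`.
  let s : C ⟶ W := α.inv ≫ hR.desc (u - t ≫ j)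
    (by rw [Preadditive.comp_sub, reassoc_of% ht, hv, sub_self])
  have hs : s ≫ q = 𝟙 C := by
    rw [← cancel_epi (R.d 0 (-1) ≫ α.hom)]
    simp only [s, assoc, Iso.hom_inv_id_assoc]
    rw [hR.g_desc_assoc, Preadditive.sub_comp, assoc, w, comp_zero, sub_zero, hu, comp_id]
  exact ⟨_, (ShortComplex.Splitting.ofExactOfSection _ hS.exact s hs hS.mono_f).f_r⟩

lemma CoEExact.exists_section {D P X : A} (hX : X ∈ 𝒳) {i : D ⟶ P} {b : P ⟶ X}
    (hE : CoEExact 𝒴 i b) : ∃ s : X ⟶ P, s ≫ b = 𝟙 X := by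
  obtain ⟨w, hS, hext⟩ := hE
  have := hS.epi_g
  obtain ⟨R, ⟨hRY, hRzero, ⟨α⟩⟩, hRr, hRl⟩ := hbp.coresolution D
  have hcogen := hbp.exists_mono hadm
  have hR : (ShortComplex.mk (R.d 0 (-1)) (R.d (-1) (-2)) (R.d_comp_d _ _ _)).Exact :=
    hRl.exact hcogen (by norm_num) (by norm_num)
  have : Mono (R.d 0 (-1)) := (hRl.exact hcogen (i := 1) (by norm_num) (by norm_num)).mono_g
    ((hRzero 1 (by norm_num)).eq_of_src _ _)
  obtain ⟨u, hu⟩ := hext (hRY (-1) le_rfl) (α.inv ≫ R.d 0 (-1))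
  obtain ⟨v, hv⟩ : ∃ v : X ⟶ R.X (-2), b ≫ v = u ≫ R.d (-1) (-2) :=
    ⟨hS.exact.desc (u ≫ R.d (-1) (-2)) (by rw [← assoc, hu, assoc, R.d_comp_d, comp_zero]),
      hS.exact.g_desc _ _⟩
  obtain ⟨t, ht⟩ := hRr.exists_lift (i := -1) (k := -3) (by norm_num) (by norm_num) hX v
    (by rw [← cancel_epi b, ← assoc, hv, assoc, R.d_comp_d, comp_zero, comp_zero])
  let r : P ⟶ D :=
    hR.lift (u - b ≫ t) (by rw [Preadditive.sub_comp, assoc, ht, hv, sub_self]) ≫ α.hom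
  have hr : i ≫ r = 𝟙 D := by
    rw [← cancel_mono (α.inv ≫ R.d 0 (-1))]
    simp only [r, assoc, Iso.hom_inv_id_assoc, id_comp]
    rw [hR.lift_f, Preadditive.comp_sub, ← assoc i b, w, zero_comp, sub_zero, hu]
  exact ⟨_, (ShortComplex.Splitting.ofExactOfRetraction _ hS.exact r hr hS.epi_g).s_g⟩

lemma EExact.exists_extend {D W C : A} {i : D ⟶ W} {p : W ⟶ C} (hE : EExact 𝒳 i p) {Y : A}
    (hY : Y ∈ 𝒴) (g : D ⟶ Y) : ∃ h : W ⟶ Y, i ≫ h = g := by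
  obtain ⟨w, hS, hlift⟩ := hE
  have hE' : EExact 𝒳 (pushout.inr i g) (pushout.desc p 0 (by simp [w])) :=
    ⟨_, shortExact_pushout hS g, fun X hX t ↦ by
      obtain ⟨h, hh⟩ := hlift hX t
      exact ⟨h ≫ pushout.inl i g, by rw [assoc, pushout.inl_desc, hh]⟩⟩
  obtain ⟨r, hr⟩ := hE'.exists_retraction hbp hadm hY
  exact ⟨pushout.inl i g ≫ r, by rw [pushout.condition_assoc, hr, comp_id]⟩

lemma CoEExact.exists_lift {D W C : A} {i : D ⟶ W} {p : W ⟶ C} (hE : CoEExact 𝒴 i p) {X : A}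
    (hX : X ∈ 𝒳) (g : X ⟶ C) : ∃ h : X ⟶ W, h ≫ p = g := by
  obtain ⟨w, hS, hext⟩ := hE
  have hE' : CoEExact 𝒴 (pullback.lift i 0 (by simp [w]) : D ⟶ pullback p g)
      (pullback.snd p g) :=
    ⟨_, shortExact_pullback hS g, fun Y hY t ↦ by
      obtain ⟨h, hh⟩ := hext hY t
      exact ⟨pullback.fst p g ≫ h, by rw [← assoc, pullback.lift_fst, hh]⟩⟩
  obtain ⟨s, hs⟩ := hE'.exists_section hbp hadm hX
  exact ⟨s ≫ pullback.fst p g, by rw [assoc, pullback.condition, reassoc_of% hs]⟩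

end Splitting

section Acyclic

variable {K : Cx A}

lemma RightAcyclic.eExact_cycles (hgen : ∀ M : A, ∃ X ∈ 𝒳, ∃ π : X ⟶ M, Epi π)
    (hK : RightAcyclic 𝒳 K) {i j k : ℤ} (hij : i = j + 1) (hjk : k = j - 1) :
    EExact 𝒳 (kernel.ι (K.d i j)) (kernel.lift (K.d j k) (K.d i j) (K.d_comp_d i j k)) := by
  have := hK.epi_kernel_lift hgen hij hjk
  refine ⟨by ext; simp, ⟨ShortComplex.exact_of_f_is_kernel _ <| isKernelOfComp (kernel.ι _) _
    (kernelIsKernel _) _ (kernel.lift_ι _ _ _)⟩, fun X hX t ↦ ?_⟩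
  obtain ⟨h, hh⟩ := hK.exists_lift hij hjk hX (t ≫ kernel.ι _) (by simp)
  exact ⟨h, by ext; simp [hh]⟩

lemma LeftAcyclic.coEExact_cokernels (hcogen : ∀ M : A, ∃ Y ∈ 𝒴, ∃ ι : M ⟶ Y, Mono ι)
    (hK : LeftAcyclic 𝒴 K) {i j k : ℤ} (hij : i = j + 1) (hjk : k = j - 1) :
    CoEExact 𝒴 (cokernel.desc (K.d i j) (K.d j k) (K.d_comp_d i j k)) (cokernel.π (K.d j k)) := by
  have := hK.mono_cokernel_desc hcogen hij hjk
  refine ⟨by ext; simp, ⟨ShortComplex.exact_of_g_is_cokernel _ <| isCokernelOfComp (cokernel.π _)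
    _ (cokernelIsCokernel _) _ (cokernel.π_desc _ _ _)⟩, fun Y hY t ↦ ?_⟩
  obtain ⟨h, hh⟩ := hK.exists_desc hij hjk hY (cokernel.π _ ≫ t) (by simp)
  exact ⟨h, by ext; simp [hh]⟩

variable (hbp : BalancedPair 𝒳 𝒴) (hadm : Admissible 𝒳 𝒴)
include hbp hadm

-- A cocycle `g` kills the cycles `Zₙ`, so it factors through `Kₙ ↠ Zₙ₋₁`; extend it along the
-- `E`-admissible mono `Zₙ₋₁ ↪ Kₙ₋₁`.
lemma RightAcyclic.leftAcyclic (hK : RightAcyclic 𝒳 K) : LeftAcyclic 𝒴 K := by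
  intro n Y hY g hg
  have hgen := hbp.exists_epi hadm
  obtain ⟨_, hS, -⟩ := hK.eExact_cycles hgen (i := n) (j := n - 1) (k := n - 1 - 1) (by omega) rfl
  have := hS.epi_g
  have hZ : kernel.ι (K.d n (n - 1)) ≫ g = 0 := by
    have := hK.epi_kernel_lift hgen (i := n + 1) (j := n) (k := n - 1) rfl rfl
    rw [← cancel_epi (kernel.lift (K.d n (n - 1)) (K.d (n + 1) n) (K.d_comp_d _ _ _)),
      kernel.lift_ι_assoc, hg, comp_zero]
  obtain ⟨h, hh⟩ := (hK.eExact_cycles hgen (i := n - 1) (j := n - 1 - 1) (k := n - 1 - 1 - 1)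
    (by omega) rfl).exists_extend hbp hadm hY (hS.exact.desc g hZ)
  refine ⟨h, ?_⟩
  rw [← kernel.lift_ι (K.d (n - 1) (n - 1 - 1)) (K.d n (n - 1)) (K.d_comp_d _ _ _), assoc, hh]
  exact hS.exact.g_desc _ _

lemma LeftAcyclic.rightAcyclic (hK : LeftAcyclic 𝒴 K) : RightAcyclic 𝒳 K := by
  intro n X hX g hg
  have hcogen := hbp.exists_mono hadm
  obtain ⟨_, hS, -⟩ := hK.coEExact_cokernels hcogen (i := n + 2) (j := n + 1) (k := n)
    (by omega) (by omega)
  have := hS.mono_f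
  have hB : g ≫ cokernel.π (K.d (n + 1) n) = 0 := by
    have := hK.mono_cokernel_desc hcogen (i := n + 1) (j := n) (k := n - 1) rfl rfl
    rw [← cancel_mono (cokernel.desc (K.d (n + 1) n) (K.d n (n - 1)) (K.d_comp_d _ _ _)),
      assoc, cokernel.π_desc, hg, zero_comp]
  obtain ⟨h, hh⟩ := (hK.coEExact_cokernels hcogen (i := n + 3) (j := n + 2) (k := n + 1)
    (by omega) (by omega)).exists_lift hbp hadm hX (hS.exact.lift g hB)
  refine ⟨h, ?_⟩
  rw [← cokernel.π_desc (K.d (n + 2) (n + 1)) (K.d (n + 1) n) (K.d_comp_d _ _ _), ← assoc, hh]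
  exact hS.exact.lift_f _ _

end Acyclic

section Perp

noncomputable def sphere (X : A) (n : ℤ) : Cx A where
  X k := if k = n then X else 0
  d _ _ := 0
  shape _ _ _ := rfl
  d_comp_d' _ _ _ _ _ := by simp

lemma sphere_X_self (X : A) (n : ℤ) : (sphere X n).X n = X := if_pos rfl

lemma sphere_mem_dwX (h0 : (0 : A) ∈ 𝒳) {X : A} (hX : X ∈ 𝒳) (n : ℤ) : sphere X n ∈ dwX 𝒳 := by
  intro m
  by_cases h : m = n
  · simpa [sphere, h] using hX
  · simpa [sphere, h] using h0

variable {K : Cx A} {X : A} {n : ℤ}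

noncomputable def attachingMap (g : X ⟶ K.X n) (i j : ℤ) : (sphere X (n + 1)).X i ⟶ K.X j :=
  if h : i = n + 1 ∧ j = n then
    eqToHom (by rw [h.1, sphere_X_self]) ≫ g ≫ eqToHom (by rw [h.2])
  else 0

lemma attachingMap_comp_d {g : X ⟶ K.X n} (hg : g ≫ K.d n (n - 1) = 0) (i j k : ℤ) :
    attachingMap g i j ≫ K.d j k = 0 := by
  unfold attachingMap
  split_ifs with h
  · obtain ⟨-, hj⟩ := h
    subst j
    by_cases hk : k = n - 1
    · subst hk
      simp [hg]
    · rw [K.shape n k (by simp only [ComplexShape.down_Rel]; omega)]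
      simp
  · simp

lemma attachingMap_shape (g : X ⟶ K.X n) {i j : ℤ} (hij : ¬ (ComplexShape.down ℤ).Rel i j) :
    attachingMap g i j = 0 := by
  unfold attachingMap
  rw [dif_neg]
  rintro ⟨rfl, rfl⟩
  exact hij (by simp)

noncomputable def attachCell (K : Cx A) (g : X ⟶ K.X n) (hg : g ≫ K.d n (n - 1) = 0) :
    Cx A where
  X m := K.X m ⊞ (sphere X (n + 1)).X m
  d i j := biprod.lift (biprod.fst ≫ K.d i j + biprod.snd ≫ attachingMap g i j) 0
  shape i j hij := by
    rw [K.shape i j hij, attachingMap_shape g hij]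
    ext <;> simp
  d_comp_d' i j k _ _ := by
    ext <;> simp [attachingMap_comp_d hg i j k]

variable (g : X ⟶ K.X n) (hg : g ≫ K.d n (n - 1) = 0)

noncomputable def attachCellInl : K ⟶ attachCell K g hg where
  f _ := biprod.inl
  comm' i j _ := by apply biprod.hom_ext <;> simp [attachCell]

noncomputable def attachCellSnd : attachCell K g hg ⟶ sphere X (n + 1) where
  f _ := biprod.snd
  comm' i j _ := by
    simp only [attachCell, sphere, comp_zero]
    exact (biprod.lift_snd _ _).symm

noncomputable def attachCellInr (i : ℤ) : (sphere X (n + 1)).X i ⟶ (attachCell K g hg).X i :=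
  biprod.inr

lemma attachCellInr_snd (i : ℤ) : attachCellInr g hg i ≫ (attachCellSnd g hg).f i = 𝟙 _ :=
  biprod.inr_snd

lemma attachCellInr_d (i j : ℤ) : attachCellInr g hg i ≫ (attachCell K g hg).d i j =
    attachingMap g i j ≫ (attachCellInl g hg).f j := by
  apply biprod.hom_ext <;> simp [attachCell, attachCellInr, attachCellInl]

lemma eqToHom_comp_attachingMap :
    eqToHom (sphere_X_self X (n + 1)).symm ≫ attachingMap g (n + 1) n = g := by
  simp [attachingMap]

lemma chEExact_attachCell : ChEExact 𝒳 (attachCellInl g hg) (attachCellSnd g hg) := fun m ↦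
  ⟨biprod.inl_snd, (ShortComplex.Splitting.ofHasBinaryBiproduct _ _).shortExact,
    fun _ _ t ↦ ⟨t ≫ attachCellInr g hg m, by rw [assoc, attachCellInr_snd, comp_id]⟩⟩

end Perp

lemma rightAcyclic_of_mem_dwPerp (h0 : (0 : A) ∈ 𝒳) {K : Cx A}
    (hK : K ∈ dwPerp 𝒳) : RightAcyclic 𝒳 K := by
  intro n X hX g hg
  obtain ⟨r, hr⟩ := hK _ (sphere_mem_dwX h0 hX (n + 1)) _ _ (chEExact_attachCell g hg)
  have hr_n : (attachCellInl g hg).f n ≫ r.f n = 𝟙 (K.X n) :=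
    congr_arg (fun φ ↦ HomologicalComplex.Hom.f φ n) hr
  refine ⟨eqToHom (sphere_X_self X (n + 1)).symm ≫ attachCellInr g hg (n + 1) ≫ r.f (n + 1), ?_⟩
  rw [assoc, assoc, r.comm, reassoc_of% (attachCellInr_d g hg), hr_n, comp_id,
    eqToHom_comp_attachingMap]

lemma exists_seq_of_exists_succ {α : ℕ → Sort*} {p : ∀ i, α i → Prop}
    {r : ∀ i, α i → α (i + 1) → Prop} (x₀ : α 0) (h₀ : p 0 x₀)
    (step : ∀ i x, p i x → ∃ y, p (i + 1) y ∧ r i x y) :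
    ∃ x : ∀ i, α i, ∀ i, p i (x i) ∧ r i (x i) (x (i + 1)) := by
  let s : ∀ i, {x // p i x} := fun i ↦ Nat.rec (motive := fun i ↦ {x // p i x}) ⟨x₀, h₀⟩
    (fun i y ↦ ⟨(step i y.1 y.2).choose, (step i y.1 y.2).choose_spec.1⟩) i
  exact ⟨fun i ↦ (s i).1, fun i ↦ ⟨(s i).2, (step i (s i).1 (s i).2).choose_spec.2⟩⟩

lemma LeftAcyclic.exists_desc_extending {K L : Cx A} (t : K ⟶ L) {n : ℤ} {Y : A}
    (hY : Y ∈ 𝒴) (hK : LeftAcyclic 𝒴 K) (hL : LeftAcyclic 𝒴 L)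
    (ht : ∀ e : K.X (n - 1 - 1) ⟶ Y, ∃ e' : L.X (n - 1 - 1) ⟶ Y, t.f _ ≫ e' = e)
    {g : L.X n ⟶ Y} (hg : L.d (n + 1) n ≫ g = 0) {h : K.X (n - 1) ⟶ Y}
    (hh : K.d n (n - 1) ≫ h = t.f n ≫ g) :
    ∃ h' : L.X (n - 1) ⟶ Y, L.d n (n - 1) ≫ h' = g ∧ t.f (n - 1) ≫ h' = h := by
  obtain ⟨h₁, hh₁⟩ := hL n hY g hg
  obtain ⟨k, hk⟩ := hK.exists_desc (i := n) (j := n - 1) (by omega) rfl hY (t.f (n - 1) ≫ h₁ - h)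
    (by rw [Preadditive.comp_sub, hh, ← t.comm_assoc, hh₁, sub_self])
  obtain ⟨k', hk'⟩ := ht k
  refine ⟨h₁ - L.d (n - 1) (n - 1 - 1) ≫ k', ?_, ?_⟩
  · rw [Preadditive.comp_sub, hh₁, L.d_comp_d_assoc, zero_comp, sub_zero]
  · rw [Preadditive.comp_sub, t.comm_assoc, hk', hk, sub_sub_cancel]

section Colimit

variable [HasColimitsOfShape ℕ A] (F : ℕ ⥤ Cx A)

lemma exists_colimit_X_desc (m : ℤ) {Y : A} (h : ∀ i, (F.obj i).X m ⟶ Y)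
    (hh : ∀ i, (F.map (homOfLE i.le_succ)).f m ≫ h (i + 1) = h i) :
    ∃ φ : (colimit F).X m ⟶ Y, ∀ i, (colimit.ι F i).f m ≫ φ = h i := by
  let hc := isColimitOfPreserves (HomologicalComplex.eval A _ m) (colimit.isColimit F)
  exact ⟨hc.desc ⟨Y, NatTrans.ofSequence h fun i ↦ (hh i).trans (comp_id _).symm⟩, hc.fac _⟩

lemma colimit_X_hom_ext {m : ℤ} {Y : A} {φ ψ : (colimit F).X m ⟶ Y}
    (h : ∀ i, (colimit.ι F i).f m ≫ φ = (colimit.ι F i).f m ≫ ψ) : φ = ψ :=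
  (isColimitOfPreserves (HomologicalComplex.eval A _ m) (colimit.isColimit F)).hom_ext h

lemma leftAcyclic_colimit (hF : ∀ i, LeftAcyclic 𝒴 (F.obj i))
    (hext : ∀ i m ⦃Y : A⦄, Y ∈ 𝒴 → ∀ e : (F.obj i).X m ⟶ Y,
      ∃ e' : (F.obj (i + 1)).X m ⟶ Y, (F.map (homOfLE i.le_succ)).f m ≫ e' = e) :
    LeftAcyclic 𝒴 (colimit F) := by
  intro n Y hY g hg
  let gi i : (F.obj i).X n ⟶ Y := (colimit.ι F i).f n ≫ g
  have hgi i : (F.obj i).d (n + 1) n ≫ gi i = 0 := by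
    simp only [gi, ← (colimit.ι F i).comm_assoc, hg, comp_zero]
  have hcompat i : (F.map (homOfLE i.le_succ)).f n ≫ gi (i + 1) = gi i := by
    simp only [gi, ← HomologicalComplex.comp_f_assoc, colimit.w]
  obtain ⟨h₀, hh₀⟩ := hF 0 n hY (gi 0) (hgi 0)
  -- Mittag-Leffler: each primitive on `F.obj i` extends to one on `F.obj (i + 1)`.
  obtain ⟨h, hh⟩ := exists_seq_of_exists_succ
    (p := fun i (h : (F.obj i).X (n - 1) ⟶ Y) ↦ (F.obj i).d n (n - 1) ≫ h = gi i)
    (r := fun i h h' ↦ (F.map (homOfLE i.le_succ)).f (n - 1) ≫ h' = h) h₀ hh₀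
    fun i h hh ↦ (hF i).exists_desc_extending _ hY (hF (i + 1)) (hext i _ hY) (hgi (i + 1))
      (hh.trans (hcompat i).symm)
  obtain ⟨φ, hφ⟩ := exists_colimit_X_desc F (n - 1) h fun i ↦ (hh i).2
  refine ⟨φ, colimit_X_hom_ext F fun i ↦ ?_⟩
  rw [(colimit.ι F i).comm_assoc, hφ, (hh i).1]

end Colimit

theorem stmt_17_general {A : Type u} [Category.{v} A] [Abelian A] [HasColimits A]
    (𝒳 𝒴 : Set A) (hbp : BalancedPair 𝒳 𝒴) (hadm : Admissible 𝒳 𝒴)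
    (F : ℕ ⥤ Cx A)
    (hmono : ∀ i : ℕ, ∃ (Q : Cx A) (q : F.obj (i + 1) ⟶ Q),
      ChEExact 𝒳 (F.map (homOfLE (Nat.le_succ i))) q)
    (hperp : ∀ i : ℕ, F.obj i ∈ dwPerp 𝒳) :
    RightAcyclic 𝒳 (colimit F) := by
  refine LeftAcyclic.rightAcyclic hbp hadm (leftAcyclic_colimit F (fun i ↦ ?_) fun i m Y hY e ↦ ?_)
  · exact (rightAcyclic_of_mem_dwPerp hbp.zero_mem_left (hperp i)).leftAcyclic hbp hadm
  · obtain ⟨Q, q, hq⟩ := hmono i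
    exact (hq m).exists_extend hbp hadm hY e

/-- The colimit of a direct system in `Ch(A, E)` with admissible monic
transition maps and all terms in `(E-dw X̃)^⊥` is right `𝒳`-acyclic. -/
theorem stmt_17 {A : Type u} [Category.{v} A] [Abelian A] [HasLimits A] [HasColimits A]
    (𝒳 𝒴 : Set A) (hbp : BalancedPair 𝒳 𝒴) (hadm : Admissible 𝒳 𝒴)
    (F : ℕ ⥤ Cx A)
    (hmono : ∀ i : ℕ, ∃ (Q : Cx A) (q : F.obj (i + 1) ⟶ Q),
      ChEExact 𝒳 (F.map (homOfLE (Nat.le_succ i))) q)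
    (hperp : ∀ i : ℕ, F.obj i ∈ dwPerp 𝒳) :
    RightAcyclic 𝒳 (colimit F) :=
  stmt_17_general 𝒳 𝒴 hbp hadm F hmono hperp

end Paper
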